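/- For a finite simple graph G with n vertices and m edges, every coefficient of the chromatic polynomial is bounded in absolute value by a binomial coefficient: writing P_G(λ) = Σ_{i=0}^{n} c_{n−i} λ^{n−i}, one has |c_{n−i}| ≤ C(m, i) for all 0 ≤ i ≤ n, where C(m, i) denotes the binomial coefficient m choose i. -/

import Mathlib

open Polynomial

/-- The number of proper colorings of the finite simple graph `G` with `k` colors. -/
def SimpleGraph.numColorings {V : Type*} [Fintype V] [DecidableEq V]
    (G : SimpleGraph V) [DecidableRel G.Adj] (k : ℕ) : ℕ :=
  Fintype.card {f : V → Fin k // ∀ a b, G.Adj a b → f a ≠ f b}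

/-!
Deletion–contraction: for an edge `e` of `G`, `P_G = P_{G-e} - P_{G/e}`, where `G - e` has
`n` vertices and `m - 1` edges and `G/e` has `n - 1` vertices and at most `m - 1` edges.
Inductively the coefficient of `λ^(n-i)` in `P_G` is `(-1)^i a_i` with `a_i ≥ 0`, and
`a_i(G) = a_i(G - e) + a_(i-1)(G/e)`, so the bounds `C(m-1, i)` and `C(m-1, i-1)` add up to
`C(m, i)` by Pascal's rule.
-/

namespace Polynomial

/-- `P = ∑_{i ≤ n} (-1)^i a_i X^(n-i)` with `0 ≤ a_i ≤ m.choose i`. -/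
def AlternatingCoeffsLeChoose (P : ℤ[X]) (n m : ℕ) : Prop :=
  P.natDegree ≤ n ∧
    ∀ i ≤ n, 0 ≤ (-1) ^ i * P.coeff (n - i) ∧ (-1) ^ i * P.coeff (n - i) ≤ m.choose i

namespace AlternatingCoeffsLeChoose

variable {P P₁ P₂ : ℤ[X]} {n m : ℕ}

theorem X_pow (n m : ℕ) : (X ^ n : ℤ[X]).AlternatingCoeffsLeChoose n m := by
  refine ⟨(natDegree_X_pow n).le, fun i hi => ?_⟩
  rcases i.eq_zero_or_pos with rfl | hi₀
  · simp
  · simp [coeff_X_pow, show n - i ≠ n by omega]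

theorem mono (h : P.AlternatingCoeffsLeChoose n m) {m' : ℕ} (hm : m ≤ m') :
    P.AlternatingCoeffsLeChoose n m' :=
  ⟨h.1, fun i hi => ⟨(h.2 i hi).1,
    (h.2 i hi).2.trans (by exact_mod_cast Nat.choose_le_choose i hm)⟩⟩

theorem sub (h₁ : P₁.AlternatingCoeffsLeChoose (n + 1) m)
    (h₂ : P₂.AlternatingCoeffsLeChoose n m) :
    (P₁ - P₂).AlternatingCoeffsLeChoose (n + 1) (m + 1) := by
  refine ⟨(natDegree_sub_le _ _).trans (max_le h₁.1 (h₂.1.trans n.le_succ)), ?_⟩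
  rintro (_ | i) hi
  · have : P₂.coeff (n + 1) = 0 := coeff_eq_zero_of_natDegree_lt (Nat.lt_succ_of_le h₂.1)
    simpa [this] using h₁.2 0 (Nat.zero_le _)
  · obtain ⟨h₁_nonneg, h₁_le⟩ := h₁.2 (i + 1) hi
    obtain ⟨h₂_nonneg, h₂_le⟩ := h₂.2 i (by omega)
    have hidx : n + 1 - (i + 1) = n - i := by omega
    rw [hidx] at h₁_nonneg h₁_le
    have hsplit : (-1) ^ (i + 1) * (P₁ - P₂).coeff (n + 1 - (i + 1)) =
        (-1) ^ (i + 1) * P₁.coeff (n - i) + (-1) ^ i * P₂.coeff (n - i) := by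
      rw [hidx, coeff_sub, pow_succ]
      ring
    rw [hsplit, Nat.choose_succ_succ, Nat.cast_add]
    constructor <;> linarith

theorem abs_coeff_le (h : P.AlternatingCoeffsLeChoose n m) {i : ℕ} (hi : i ≤ n) :
    |P.coeff (n - i)| ≤ m.choose i := by
  obtain ⟨h_nonneg, h_le⟩ := h.2 i hi
  rwa [← abs_of_nonneg h_nonneg, abs_mul, abs_pow, abs_neg, abs_one, one_pow, one_mul] at h_le

end AlternatingCoeffsLeChoose

theorem eq_of_eval_natCast_eq {P Q : ℤ[X]} (h : ∀ k : ℕ, P.eval (k : ℤ) = Q.eval (k : ℤ)) :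
    P = Q :=
  eq_of_infinite_eval_eq P Q <| Set.infinite_of_injective_forall_mem Nat.cast_injective h

end Polynomial

theorem Fintype.card_subtype_ne_add_one {V : Type*} [Fintype V] [DecidableEq V] (v : V) :
    Fintype.card {x : V // x ≠ v} + 1 = Fintype.card V := by
  rw [Fintype.card_subtype_compl, Fintype.card_subtype_eq]
  have := Fintype.card_pos_iff.mpr ⟨v⟩
  omega

namespace SimpleGraph

variable {V W α : Type*}

theorem forall_map_adj_ne_iff (G : SimpleGraph V) (f : V → W) (g : W → α) :
    (∀ a b, (G.map f).Adj a b → g a ≠ g b) ↔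
      ∀ x y, G.Adj x y → f x ≠ f y → g (f x) ≠ g (f y) := by
  constructor
  · exact fun h x y hxy hne => h _ _ (map_adj_apply' hxy hne)
  · rintro h _ _ ⟨hne, x, y, hxy, rfl, rfl⟩
    exact h x y hxy hne

theorem forall_adj_ne_iff_deleteEdges {G : SimpleGraph V} {u v : V} (huv : G.Adj u v)
    (f : V → α) :
    (∀ a b, G.Adj a b → f a ≠ f b) ↔
      (∀ a b, (G.deleteEdges {s(u, v)}).Adj a b → f a ≠ f b) ∧ f u ≠ f v := by
  refine ⟨fun h => ⟨fun a b hab => h a b hab.1, h u v huv⟩, ?_⟩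
  rintro ⟨h, huv'⟩ a b hab
  by_cases he : s(a, b) = s(u, v)
  · rcases Sym2.eq_iff.mp he with ⟨rfl, rfl⟩ | ⟨rfl, rfl⟩
    exacts [huv', huv'.symm]
  · exact h a b ((deleteEdges_adj ..).mpr ⟨hab, he⟩)

section Contraction

variable [DecidableEq V] {u v : V}

def mergeVertex (huv : u ≠ v) (x : V) : {x : V // x ≠ v} :=
  if hx : x = v then ⟨u, huv⟩ else ⟨x, hx⟩

theorem val_mergeVertex (huv : u ≠ v) (x : V) :
    (mergeVertex huv x : V) = if x = v then u else x := by
  unfold mergeVertex; split_ifs <;> rfl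

theorem mergeVertex_val (huv : u ≠ v) (x : {x : V // x ≠ v}) : mergeVertex huv x = x :=
  dif_neg x.2

theorem mergeVertex_eq_mergeVertex_iff (huv : u ≠ v) {x y : V} (hxy : x ≠ y) :
    mergeVertex huv x = mergeVertex huv y ↔ s(x, y) = s(u, v) := by
  rw [← Subtype.val_inj, val_mergeVertex, val_mergeVertex, Sym2.eq_iff]
  split_ifs <;> grind

theorem deleteEdges_adj_iff_mergeVertex_ne (G : SimpleGraph V) (huv : u ≠ v) {x y : V} :
    (G.deleteEdges {s(u, v)}).Adj x y ↔ G.Adj x y ∧ mergeVertex huv x ≠ mergeVertex huv y := by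
  rw [deleteEdges_adj, Set.mem_singleton_iff]
  exact and_congr_right fun hxy => (mergeVertex_eq_mergeVertex_iff huv hxy.ne).not.symm

def contractEdge (G : SimpleGraph V) (huv : u ≠ v) : SimpleGraph {x : V // x ≠ v} :=
  G.map (mergeVertex huv)

theorem forall_contractEdge_adj_ne_iff (G : SimpleGraph V) (huv : u ≠ v)
    (g : {x : V // x ≠ v} → α) :
    (∀ a b, (G.contractEdge huv).Adj a b → g a ≠ g b) ↔
      ∀ x y, (G.deleteEdges {s(u, v)}).Adj x y →
        g (mergeVertex huv x) ≠ g (mergeVertex huv y) := by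
  simp only [contractEdge, forall_map_adj_ne_iff, deleteEdges_adj_iff_mergeVertex_ne G huv,
    and_imp]

def contractEdgeColoringEquiv (G : SimpleGraph V) (huv : u ≠ v) :
    {f : V → α // (∀ a b, (G.deleteEdges {s(u, v)}).Adj a b → f a ≠ f b) ∧ f u = f v} ≃
      {g : {x : V // x ≠ v} → α // ∀ a b, (G.contractEdge huv).Adj a b → g a ≠ g b} where
  toFun f := ⟨f.1 ∘ Subtype.val, by
    have hf : ∀ x, f.1 (mergeVertex huv x) = f.1 x := fun x => by
      rw [val_mergeVertex]; split_ifs with hx <;> simp [hx, f.2.2]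
    rw [forall_contractEdge_adj_ne_iff]
    simpa only [Function.comp_apply, hf] using f.2.1⟩
  invFun g := ⟨g.1 ∘ mergeVertex huv,
    (forall_contractEdge_adj_ne_iff G huv g.1).mp g.2, by simp [mergeVertex, huv]⟩
  left_inv f := by
    ext x
    simp only [Function.comp_apply, val_mergeVertex]
    split_ifs with hx <;> simp [hx, f.2.2]
  right_inv g := by
    ext x
    simp [mergeVertex_val]

end Contraction

section Finite

variable [Fintype V] [DecidableEq V] {u v : V}

theorem card_edgeFinset_deleteEdges_singleton (G : SimpleGraph V) [DecidableRel G.Adj]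
    {e : Sym2 V} (he : e ∈ G.edgeSet) [DecidableRel (G.deleteEdges {e}).Adj] :
    (G.deleteEdges {e}).edgeFinset.card = G.edgeFinset.card - 1 := by
  have : (G.deleteEdges {e}).edgeFinset = G.edgeFinset.erase e := by ext; simp [and_comm]
  rw [this, Finset.card_erase_of_mem (mem_edgeFinset.mpr he)]

theorem numColorings_bot [DecidableRel (⊥ : SimpleGraph V).Adj] (k : ℕ) :
    (⊥ : SimpleGraph V).numColorings k = k ^ Fintype.card V := by
  simp [numColorings]

theorem numColorings_deleteEdges (G : SimpleGraph V) [DecidableRel G.Adj] (huv : G.Adj u v)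
    [DecidableRel (G.deleteEdges {s(u, v)}).Adj] [DecidableRel (G.contractEdge huv.ne).Adj]
    (k : ℕ) :
    (G.deleteEdges {s(u, v)}).numColorings k =
      G.numColorings k + (G.contractEdge huv.ne).numColorings k := by
  classical
  rw [numColorings, numColorings, numColorings, add_comm, ← Fintype.card_sum]
  refine Fintype.card_congr <|
    (Equiv.sumCompl fun f : {f : V → Fin k // _} => f.1 u = f.1 v).symm.trans <|
      Equiv.sumCongr ?_ ?_
  · exact (Equiv.subtypeSubtypeEquivSubtypeInter _ _).trans (contractEdgeColoringEquiv G huv.ne)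
  · exact (Equiv.subtypeSubtypeEquivSubtypeInter _ _).trans
      (Equiv.subtypeEquivRight fun f => (forall_adj_ne_iff_deleteEdges huv f).symm)

theorem card_edgeFinset_contractEdge_le (G : SimpleGraph V) (huv : u ≠ v)
    [DecidableRel (G.deleteEdges {s(u, v)}).Adj] [DecidableRel (G.contractEdge huv).Adj] :
    (G.contractEdge huv).edgeFinset.card ≤ (G.deleteEdges {s(u, v)}).edgeFinset.card := by
  refine (Finset.card_le_card fun e he => ?_).trans
    (Finset.card_image_le (f := Sym2.map (mergeVertex huv)))
  induction e using Sym2.ind with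
  | _ a b =>
    obtain ⟨hne, x, y, hxy, rfl, rfl⟩ := mem_edgeFinset.mp he
    exact Finset.mem_image.mpr ⟨s(x, y),
      mem_edgeFinset.mpr ((deleteEdges_adj_iff_mergeVertex_ne G huv).mpr ⟨hxy, hne⟩), rfl⟩

theorem exists_chromaticPolynomial_alternatingCoeffsLeChoose (G : SimpleGraph V)
    [DecidableRel G.Adj] {m : ℕ} (hm : G.edgeFinset.card ≤ m) :
    ∃ P : ℤ[X], (∀ k : ℕ, P.eval (k : ℤ) = G.numColorings k) ∧
      P.AlternatingCoeffsLeChoose (Fintype.card V) m := by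
  induction m generalizing V with
  | zero =>
    obtain rfl : G = ⊥ := edgeFinset_eq_empty.mp (Finset.card_eq_zero.mp (Nat.le_zero.mp hm))
    exact ⟨X ^ Fintype.card V, fun k => by simp [numColorings_bot], .X_pow _ 0⟩
  | succ m ih =>
    obtain hle | hlt := le_or_gt G.edgeFinset.card m
    · obtain ⟨P, hP, hbound⟩ := ih G hle
      exact ⟨P, hP, hbound.mono m.le_succ⟩
    obtain ⟨e, he⟩ := Finset.card_pos.mp (m.zero_le.trans_lt hlt)
    induction e using Sym2.ind with
    | _ u v =>
    classical
    have huv : G.Adj u v := mem_edgeFinset.mp he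
    have hdel : (G.deleteEdges {s(u, v)}).edgeFinset.card ≤ m := by
      rw [card_edgeFinset_deleteEdges_singleton G huv]
      omega
    obtain ⟨P₁, hP₁, hbound₁⟩ := ih (G.deleteEdges {s(u, v)}) hdel
    obtain ⟨P₂, hP₂, hbound₂⟩ :=
      ih (G.contractEdge huv.ne) ((card_edgeFinset_contractEdge_le G huv.ne).trans hdel)
    rw [← Fintype.card_subtype_ne_add_one v] at hbound₁ ⊢
    refine ⟨P₁ - P₂, fun k => ?_, hbound₁.sub hbound₂⟩
    rw [eval_sub, hP₁, hP₂, numColorings_deleteEdges G huv k]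
    push_cast
    ring

end Finite

end SimpleGraph

/-- For a finite simple graph `G` with `n` vertices and `m` edges, every coefficient of
the chromatic polynomial satisfies `|c_{n−i}| ≤ C(m, i)` for `0 ≤ i ≤ n`. -/
theorem chromaticPolynomial_coeff_le_choose {V : Type*} [Fintype V] [DecidableEq V]
    (G : SimpleGraph V) [DecidableRel G.Adj] (P : Polynomial ℤ)
    (hP : ∀ k : ℕ, P.eval (k : ℤ) = G.numColorings k) :
    ∀ i ≤ Fintype.card V,
      |P.coeff (Fintype.card V - i)| ≤ (G.edgeFinset.card.choose i : ℤ) := by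
  obtain ⟨Q, hQ, hbound⟩ := G.exists_chromaticPolynomial_alternatingCoeffsLeChoose le_rfl
  obtain rfl : P = Q := eq_of_eval_natCast_eq fun k => by rw [hP, hQ]
  exact fun i hi => hbound.abs_coeff_le hi
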